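/- Let R be an associative ring with 1, n ≥ 3, and A, B two-sided ideals of R. Then E(n, A∘B) ⊆ [E(n,A), E(n,B)], where A∘B = AB + BA. -/

import Mathlib

open Matrix

/-- `GL(n,R)` over an associative ring `R` with `1`, as units of the matrix ring. -/
abbrev GLn (n : ℕ) (R : Type*) [Ring R] := (Matrix (Fin n) (Fin n) R)ˣ

/-- The elementary transvection `t_{ij}(c) = e + c·e_{ij}`, for `i ≠ j`. -/
def t {R : Type*} [Ring R] {n : ℕ} (i j : Fin n) (hij : i ≠ j) (c : R) :
    GLn n R :=
  ⟨1 + Matrix.single i j c, 1 - Matrix.single i j c,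
   by
    have h0 : single i j c * single i j c = 0 :=
      single_mul_single_of_ne (c := c) i j i hij.symm c
    noncomm_ring
    simp [h0],
   by
    have h0 : single i j c * single i j c = 0 :=
      single_mul_single_of_ne (c := c) i j i hij.symm c
    noncomm_ring
    simp [h0]⟩

/-- The (unrelative) elementary subgroup `E(n,A)` generated by `t_{ij}(a)`, `a ∈ A`. -/
def E (R : Type*) [Ring R] (n : ℕ) (A : TwoSidedIdeal R) : Subgroup (GLn n R) :=
  Subgroup.closure { g | ∃ i j, ∃ hij : i ≠ j, ∃ a ∈ A, g = t i j hij a }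

/-- The symmetrised product `A∘B = AB + BA` of two-sided ideals. -/
def symProd {R : Type*} [Ring R] (A B : TwoSidedIdeal R) : TwoSidedIdeal R :=
  TwoSidedIdeal.span {x | ∃ a ∈ A, ∃ b ∈ B, x = a * b ∨ x = b * a}

section Aux

variable {R : Type*} [Ring R] {n : ℕ}

open scoped commutatorElement

lemma stdBasisMatrix_add' (i j : Fin n) (x y : R) :
    single i j (x + y) = single i j x + single i j y := by
  ext a b; simp [single]; split <;> simp

lemma stdBasisMatrix_neg' (i j : Fin n) (x : R) :
    single i j (-x) = -single i j x := by
  ext a b; simp [single]; split <;> simp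

lemma t_mul (i j : Fin n) (hij : i ≠ j) (x y : R) :
    t i j hij x * t i j hij y = t i j hij (x + y) := by
  ext : 1
  show (1 + single i j x) * (1 + single i j y) = 1 + single i j (x + y)
  have h0 : single i j x * single i j y = 0 :=
    single_mul_single_of_ne (c := x) i j i hij.symm y
  rw [stdBasisMatrix_add']
  noncomm_ring
  simp [h0]

lemma t_zero (i j : Fin n) (hij : i ≠ j) : t i j hij (0 : R) = 1 := by
  ext : 1
  show 1 + single i j (0 : R) = 1
  simp

lemma t_inv (i j : Fin n) (hij : i ≠ j) (x : R) :
    (t i j hij x)⁻¹ = t i j hij (-x) := by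
  ext : 1
  show 1 - single i j x = 1 + single i j (-x)
  rw [stdBasisMatrix_neg', sub_eq_add_neg]

lemma t_commutator (i j k : Fin n)
    (hij : i ≠ j) (hik : i ≠ k) (hkj : k ≠ j) (a b : R) :
    ⁅t i k hik a, t k j hkj b⁆ = t i j hij (a * b) := by
  ext : 1
  have hval : ∀ (u v : GLn n R),
      (⁅u, v⁆ : GLn n R).val = u.val * v.val * (u⁻¹).val * (v⁻¹).val := fun u v => rfl
  rw [hval]
  show (1 + single i k a) * (1 + single k j b) *
      (1 - single i k a) * (1 - single k j b)
      = 1 + single i j (a * b)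
  set A := single i k a with hA
  set B := single k j b with hB
  set C := single i j (a * b) with hC
  have hAA : A * A = 0 := single_mul_single_of_ne (c := a) i k i hik.symm a
  have hBB : B * B = 0 := single_mul_single_of_ne (c := b) k j k hkj.symm b
  have hBA : B * A = 0 := single_mul_single_of_ne (c := b) k j i (Ne.symm hij) a
  have hAB : A * B = C := single_mul_single_same (c := a) i k j b
  have hCA : C * A = 0 := single_mul_single_of_ne (c := a * b) i j i (Ne.symm hij) a
  have hCB : C * B = 0 := single_mul_single_of_ne (c := a * b) i j k hkj.symm b
  have hAC : A * C = 0 := single_mul_single_of_ne (c := a) i k i (Ne.symm hik) (a * b)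
  have hBC : B * C = 0 := single_mul_single_of_ne (c := b) k j i (Ne.symm hij) (a * b)
  have hCC : C * C = 0 := single_mul_single_of_ne (c := a * b) i j i hij.symm (a * b)
  noncomm_ring
  simp [hAA, hBB, hBA, hAB, hCA, hCB, hAC, hBC, hCC, mul_assoc]

lemma exists_third (hn : 3 ≤ n) (i j : Fin n) : ∃ k : Fin n, k ≠ i ∧ k ≠ j := by
  by_contra h
  push_neg at h
  have hsub : (Finset.univ : Finset (Fin n)) ⊆ {i, j} := by
    intro k _
    rcases eq_or_ne k i with rfl | hki
    · simp
    · simp [h k hki]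
  have h1 := Finset.card_le_card hsub
  simp only [Finset.card_univ, Fintype.card_fin] at h1
  have h2 : ({i, j} : Finset (Fin n)).card ≤ 2 :=
    (Finset.card_insert_le _ _).trans (by simp)
  omega

end Aux

theorem stmt14 {R : Type*} [Ring R] {n : ℕ} (hn : 3 ≤ n) (A B : TwoSidedIdeal R) :
    E R n (symProd A B) ≤ ⁅E R n A, E R n B⁆ := by
  have hkey : ∀ (x : R), x ∈ symProd A B → ∀ (i j : Fin n) (hij : i ≠ j),
      t i j hij x ∈ ⁅E R n A, E R n B⁆ := by
    intro x hx
    rw [symProd, TwoSidedIdeal.mem_span_iff_mem_addSubgroup_closure] at hx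
    induction hx using AddSubgroup.closure_induction with
    | mem z hz =>
      intro i j hij
      obtain ⟨y, ⟨r, -, s, hs, hy⟩, r', -, hz⟩ := hz
      obtain ⟨k, hki, hkj⟩ := exists_third hn i j
      obtain ⟨a, ha, b, hb, hab | hba⟩ := hs
      · have hz' : z = (r * a) * (b * r') := by
          rw [← hz, ← hy, hab]; simp [mul_assoc]
        rw [hz', ← t_commutator i j k hij (Ne.symm hki) hkj (r * a) (b * r')]
        exact Subgroup.commutator_mem_commutator
          (Subgroup.subset_closure ⟨i, k, Ne.symm hki, r * a, A.mul_mem_left r a ha, rfl⟩)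
          (Subgroup.subset_closure ⟨k, j, hkj, b * r', B.mul_mem_right b r' hb, rfl⟩)
      · have hz' : z = (r * b) * (a * r') := by
          rw [← hz, ← hy, hba]; simp [mul_assoc]
        rw [hz', ← t_commutator i j k hij (Ne.symm hki) hkj (r * b) (a * r'),
          Subgroup.commutator_comm]
        exact Subgroup.commutator_mem_commutator
          (Subgroup.subset_closure ⟨i, k, Ne.symm hki, r * b, B.mul_mem_left r b hb, rfl⟩)
          (Subgroup.subset_closure ⟨k, j, hkj, a * r', A.mul_mem_right a r' ha, rfl⟩)
    | zero =>
      intro i j hij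
      rw [t_zero]
      exact Subgroup.one_mem _
    | add u v hu hv ihu ihv =>
      intro i j hij
      rw [← t_mul i j hij u v]
      exact Subgroup.mul_mem _ (ihu i j hij) (ihv i j hij)
    | neg u hu ihu =>
      intro i j hij
      rw [← t_inv i j hij u]
      exact Subgroup.inv_mem _ (ihu i j hij)
  rw [E, Subgroup.closure_le]
  rintro g ⟨i, j, hij, x, hx, rfl⟩
  exact hkey x hx i j hij
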